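/- Let φ = (1+√5)/2. For all real numbers p and r satisfying (1 + φ²)p² + r² = 1, one has the identity 10φ·(φ⁴p² − r²)·(φ⁻²p² − r²)·p² = (2/√5)·(16r⁴ − 12r² + 1)·(1 − r²). Consequently, along the singular orbit y = φx of the icosahedral superflow, the coordinate r satisfies the autonomous ODE r′ = (2/√5)(16r⁴ − 12r² + 1)(1 − r²). -/

import Mathlib

/-- The golden ratio. -/
noncomputable def φ : ℝ := (1 + Real.sqrt 5) / 2

/-!
With `φ² = φ + 1` one has `φ⁴ = 3φ + 2`, `φ⁻² = 2 - φ` and `1 + φ² = φ(2φ - 1)`, where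
`2φ - 1 = √5`. Eliminating `r² = 1 - (φ + 2)p²` turns the two factors `φ⁴p² - r²` and
`φ⁻²p² - r²` into `4(φ + 1)p² - 1` and `4p² - 1`, whose product is `(16r⁴ - 12r² + 1)/5`;
the remaining factor `10φp²` equals `10(1 - r²)/√5`.
-/

section GoldenRoot

variable {K : Type*} [Field K] {x : K}

lemma pow_four_of_sq_eq_add_one (hx : x ^ 2 = x + 1) : x ^ 4 = 3 * x + 2 := by
  linear_combination (x ^ 2 + x + 2) * hx

lemma one_div_sq_of_sq_eq_add_one (hx : x ^ 2 = x + 1) : 1 / x ^ 2 = 2 - x := by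
  have hx0 : x ^ 2 ≠ 0 := by
    rw [hx]
    intro h
    simp [show x = -1 by linear_combination h] at hx
  rw [div_eq_iff hx0]
  linear_combination (x - 1) * hx

lemma two_mul_sub_one_ne_zero_of_sq_eq_add_one (hx : x ^ 2 = x + 1) (h5 : (5 : K) ≠ 0) :
    2 * x - 1 ≠ 0 := by
  have hsq : (2 * x - 1) ^ 2 = 5 := by linear_combination 4 * hx
  intro h
  rw [h, zero_pow two_ne_zero] at hsq
  exact h5 hsq.symm

lemma five_mul_factors_eq (hx : x ^ 2 = x + 1) {q u : K} (h : (1 + x ^ 2) * q + u = 1) :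
    5 * ((x ^ 4 * q - u) * (1 / x ^ 2 * q - u)) = 16 * u ^ 2 - 12 * u + 1 := by
  rw [pow_four_of_sq_eq_add_one hx, one_div_sq_of_sq_eq_add_one hx]
  obtain rfl : u = 1 - (x + 2) * q := by linear_combination h - q * hx
  linear_combination -16 * q ^ 2 * hx

lemma golden_orbit_identity (hx : x ^ 2 = x + 1) (h5 : (5 : K) ≠ 0) {p r : K}
    (h : (1 + x ^ 2) * p ^ 2 + r ^ 2 = 1) :
    10 * x * (x ^ 4 * p ^ 2 - r ^ 2) * ((1 / x ^ 2) * p ^ 2 - r ^ 2) * p ^ 2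
      = (2 / (2 * x - 1)) * (16 * r ^ 4 - 12 * r ^ 2 + 1) * (1 - r ^ 2) := by
  have hs := two_mul_sub_one_ne_zero_of_sq_eq_add_one hx h5
  have hxp : x * p ^ 2 = (1 - r ^ 2) / (2 * x - 1) := by
    rw [eq_div_iff hs]
    linear_combination h + p ^ 2 * hx
  calc 10 * x * (x ^ 4 * p ^ 2 - r ^ 2) * ((1 / x ^ 2) * p ^ 2 - r ^ 2) * p ^ 2
      = 2 * (x * p ^ 2) * (5 * ((x ^ 4 * p ^ 2 - r ^ 2) * (1 / x ^ 2 * p ^ 2 - r ^ 2))) := by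
        ring
    _ = (2 / (2 * x - 1)) * (16 * r ^ 4 - 12 * r ^ 2 + 1) * (1 - r ^ 2) := by
        rw [five_mul_factors_eq hx h, hxp]
        ring

end GoldenRoot

lemma φ_sq : φ ^ 2 = φ + 1 :=
  Real.goldenRatio_sq

lemma sqrt_five_eq_two_mul_φ_sub_one : Real.sqrt 5 = 2 * φ - 1 := by
  unfold φ
  ring

lemma φ_orbit_identity {p r : ℝ} (h : (1 + φ ^ 2) * p ^ 2 + r ^ 2 = 1) :
    10 * φ * (φ ^ 4 * p ^ 2 - r ^ 2) * ((1 / φ ^ 2) * p ^ 2 - r ^ 2) * p ^ 2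
      = (2 / Real.sqrt 5) * (16 * r ^ 4 - 12 * r ^ 2 + 1) * (1 - r ^ 2) := by
  rw [sqrt_five_eq_two_mul_φ_sub_one]
  exact golden_orbit_identity φ_sq (by norm_num) h

/-- For `(1 + φ²)p² + r² = 1` one has
`10φ(φ⁴p² − r²)(φ⁻²p² − r²)p² = (2/√5)(16r⁴ − 12r² + 1)(1 − r²)`; consequently,
along the singular orbit `y = φx` of the icosahedral superflow, the coordinate `r`
satisfies the autonomous ODE `r′ = (2/√5)(16r⁴ − 12r² + 1)(1 − r²)`. -/
theorem stmt16 :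
    (∀ p r : ℝ, (1 + φ ^ 2) * p ^ 2 + r ^ 2 = 1 →
      10 * φ * (φ ^ 4 * p ^ 2 - r ^ 2) * ((1 / φ ^ 2) * p ^ 2 - r ^ 2) * p ^ 2
        = (2 / Real.sqrt 5) * (16 * r ^ 4 - 12 * r ^ 2 + 1) * (1 - r ^ 2)) ∧
    (∀ (I : Set ℝ) (p r : ℝ → ℝ),
      (∀ t ∈ I, (1 + φ ^ 2) * (p t) ^ 2 + (r t) ^ 2 = 1) →
      (∀ t ∈ I, HasDerivAt r
        (10 * φ * (φ ^ 4 * (p t) ^ 2 - (r t) ^ 2) * ((1 / φ ^ 2) * (p t) ^ 2 - (r t) ^ 2)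
          * (p t) ^ 2) t) →
      ∀ t ∈ I, HasDerivAt r
        ((2 / Real.sqrt 5) * (16 * (r t) ^ 4 - 12 * (r t) ^ 2 + 1) * (1 - (r t) ^ 2)) t) := by
  refine ⟨fun p r h => φ_orbit_identity h, fun I p r hsphere hflow t ht => ?_⟩
  rw [← φ_orbit_identity (hsphere t ht)]
  exact hflow t ht
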